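/- Define E, O: ℝ^T → ℝ by E(x) = −Ψ(1)Φ(x₁) + Σ_{1 ≤ i < T, i even} [Ψ(−x_i)Φ(−x_{i+1}) − Ψ(x_i)Φ(x_{i+1})] and O(x) = Σ_{1 ≤ i < T, i odd} [Ψ(−x_i)Φ(−x_{i+1}) − Ψ(x_i)Φ(x_{i+1})]. Then progress along the chain alternates between E and O: for every x ∈ ℝ^T and every k with 0 ≤ k < T such that x_j = 0 for all j > k, (i) ∂_j E(x) = 0 and ∂_j O(x) = 0 for all j > k + 1; (ii) if k is odd then additionally ∂_{k+1} E(x) = 0; (iii) if k is even then additionally ∂_{k+1} O(x) = 0. In particular, only the even-part E can make the (k+1)-st coordinate of a gradient step nonzero when k is even, and only the odd-part O can when k is odd. -/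

import Mathlib

/-- Ψ(z) = 0 for z ≤ 1/2 and Ψ(z) = exp(1 − 1/(2z−1)²) for z > 1/2. -/
noncomputable def Psi (z : ℝ) : ℝ :=
  if z ≤ 1/2 then 0 else Real.exp (1 - 1/(2*z - 1)^2)

/-- Φ(z) = √e ∫_{−∞}^{z} exp(−t²/2) dt. -/
noncomputable def Phi (z : ℝ) : ℝ :=
  Real.sqrt (Real.exp 1) * ∫ t in Set.Iic z, Real.exp (-t^2/2)

/-- The 1-based `i`-th coordinate of `x` (junk value 0 out of range): `coord x i = x_{i+1}`
in 0-based terms. -/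
noncomputable def coord {T : ℕ} (x : EuclideanSpace ℝ (Fin T)) (i : ℕ) : ℝ :=
  if h : i < T then x ⟨i, h⟩ else 0

/-- f̂_T(x) = −Ψ(1)Φ(x₁) + Σ_{i=1}^{T−1} [Ψ(−x_i)Φ(−x_{i+1}) − Ψ(x_i)Φ(x_{i+1})],
where the 1-based coordinate x_i is `coord x (i-1)`. -/
noncomputable def fhat (T : ℕ) (x : EuclideanSpace ℝ (Fin T)) : ℝ :=
  -(Psi 1) * Phi (coord x 0) +
    ∑ i ∈ Finset.Ico 1 T,
      (Psi (-(coord x (i-1))) * Phi (-(coord x i)) - Psi (coord x (i-1)) * Phi (coord x i))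


/-- The even part E(x) = −Ψ(1)Φ(x₁) + Σ_{1 ≤ i < T, i even}
[Ψ(−x_i)Φ(−x_{i+1}) − Ψ(x_i)Φ(x_{i+1})] (1-based coordinates). -/
noncomputable def Echain (T : ℕ) (x : EuclideanSpace ℝ (Fin T)) : ℝ :=
  -(Psi 1) * Phi (coord x 0) +
    ∑ i ∈ (Finset.Ico 1 T).filter (fun i => Even i),
      (Psi (-(coord x (i-1))) * Phi (-(coord x i)) - Psi (coord x (i-1)) * Phi (coord x i))

/-- The odd part O(x) = Σ_{1 ≤ i < T, i odd}
[Ψ(−x_i)Φ(−x_{i+1}) − Ψ(x_i)Φ(x_{i+1})] (1-based coordinates). -/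
noncomputable def Ochain (T : ℕ) (x : EuclideanSpace ℝ (Fin T)) : ℝ :=
  ∑ i ∈ (Finset.Ico 1 T).filter (fun i => Odd i),
    (Psi (-(coord x (i-1))) * Phi (-(coord x i)) - Psi (coord x (i-1)) * Phi (coord x i))
/-!
Ψ vanishes on (-∞, 1/2], so the link Ψ(-a)Φ(-b) - Ψ(a)Φ(b) is zero whenever |a| ≤ 1/2.
Move x by less than 1/2 along the j-th coordinate axis (1-based), where j ≥ k + 1. The link of
index i, on (x_i, x_{i+1}), is unaffected if it does not involve x_j, and stays zero if its first
coordinate is one of the vanishing x_{k+1}, x_{k+2}, …. The only other link is the one of index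
j - 1 when j - 1 ≤ k, that is, the link of index k when j = k + 1: it lies in E for even k and in O
for odd k. The head term of E only involves x₁. So the function in question is constant along the
segment, and its j-th partial derivative vanishes.
-/

open Filter Topology

theorem fderiv_apply_eq_zero_of_eventually_const_line {E F : Type*}
    [NormedAddCommGroup E] [NormedSpace ℝ E] [NormedAddCommGroup F] [NormedSpace ℝ F]
    {f : E → F} {x v : E} (h : ∀ᶠ t in 𝓝 (0 : ℝ), f (x + t • v) = f x) :
    fderiv ℝ f x v = 0 := by
  by_cases hf : DifferentiableAt ℝ f x
  · rw [← hf.lineDeriv_eq_fderiv, lineDeriv, EventuallyEq.deriv_eq h, deriv_const]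
  · rw [fderiv_zero_of_not_differentiableAt hf, zero_apply]

theorem gradient_apply_eq_zero_of_eventually_const_line {ι : Type*} [Fintype ι] [DecidableEq ι]
    {f : EuclideanSpace ℝ ι → ℝ} {x : EuclideanSpace ℝ ι} {j : ι}
    (h : ∀ᶠ t in 𝓝 (0 : ℝ), f (x + t • EuclideanSpace.single j 1) = f x) :
    gradient f x j = 0 := by
  have h' := fderiv_apply_eq_zero_of_eventually_const_line h
  rw [← toDual_gradient, InnerProductSpace.toDual_apply_apply,
    EuclideanSpace.inner_single_right] at h'
  simpa using h'

lemma Psi_eq_zero_of_le {z : ℝ} (hz : z ≤ 1/2) : Psi z = 0 := if_pos hz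

noncomputable def chainLink (a b : ℝ) : ℝ := Psi (-a) * Phi (-b) - Psi a * Phi b

lemma chainLink_eq_zero {a : ℝ} (ha : |a| ≤ 1/2) (b : ℝ) : chainLink a b = 0 := by
  rw [chainLink, Psi_eq_zero_of_le ((neg_le_abs a).trans ha),
    Psi_eq_zero_of_le ((le_abs_self a).trans ha)]
  ring

section Chain

variable {T : ℕ} (x : EuclideanSpace ℝ (Fin T))

lemma coord_eq_zero_of_le {k : ℕ} (hx : ∀ j : Fin T, k ≤ (j : ℕ) → x j = 0) {m : ℕ}
    (hm : k ≤ m) : coord x m = 0 := by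
  unfold coord
  split_ifs with h
  exacts [hx ⟨m, h⟩ hm, rfl]

lemma coord_add_smul_single (j : Fin T) (t : ℝ) (m : ℕ) :
    coord (x + t • EuclideanSpace.single j 1) m = coord x m + if m = j then t else 0 := by
  unfold coord
  split_ifs <;> simp_all [Fin.ext_iff]

noncomputable def chainSum (S : Finset ℕ) : ℝ := ∑ i ∈ S, chainLink (coord x (i-1)) (coord x i)

variable {x} {j : Fin T}

lemma chainLink_coord_add_smul_single {t : ℝ} (ht : |t| ≤ 1/2) {i : ℕ}
    (hi : i - 1 = j ∨ i = j → coord x (i-1) = 0) :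
    chainLink (coord (x + t • EuclideanSpace.single j 1) (i-1))
        (coord (x + t • EuclideanSpace.single j 1) i) =
      chainLink (coord x (i-1)) (coord x i) := by
  simp only [coord_add_smul_single]
  by_cases h0 : coord x (i-1) = 0
  · rw [h0, chainLink_eq_zero (by rw [zero_add]; split_ifs; exacts [ht, by norm_num]),
      chainLink_eq_zero (by simp)]
  · have hne : i - 1 ≠ j ∧ i ≠ j := by tauto
    simp [hne]

lemma eventually_chainSum_add_smul_single_eq {S : Finset ℕ}
    (hS : ∀ i ∈ S, i - 1 = j ∨ i = j → coord x (i-1) = 0) :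
    ∀ᶠ t in 𝓝 (0 : ℝ), chainSum (x + t • EuclideanSpace.single j 1) S = chainSum x S := by
  filter_upwards [Metric.closedBall_mem_nhds (0 : ℝ) (by norm_num : (0 : ℝ) < 1/2)] with t ht
  rw [mem_closedBall_zero_iff, Real.norm_eq_abs] at ht
  exact Finset.sum_congr rfl fun _ hi => chainLink_coord_add_smul_single ht (hS _ hi)

lemma gradient_Echain_eq_zero (hj : (j : ℕ) ≠ 0)
    (hS : ∀ i ∈ (Finset.Ico 1 T).filter Even, i - 1 = j ∨ i = j → coord x (i-1) = 0) :
    gradient (Echain T) x j = 0 := by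
  refine gradient_apply_eq_zero_of_eventually_const_line ?_
  filter_upwards [eventually_chainSum_add_smul_single_eq hS] with t ht
  change _ + chainSum _ _ = _ + chainSum _ _
  rw [ht, coord_add_smul_single, if_neg (Ne.symm hj), add_zero]

lemma gradient_Ochain_eq_zero
    (hS : ∀ i ∈ (Finset.Ico 1 T).filter Odd, i - 1 = j ∨ i = j → coord x (i-1) = 0) :
    gradient (Ochain T) x j = 0 :=
  gradient_apply_eq_zero_of_eventually_const_line (eventually_chainSum_add_smul_single_eq hS)

end Chain

theorem chain_alternation_general (T : ℕ) (x : EuclideanSpace ℝ (Fin T))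
    (k : ℕ) (hk : k < T) (hx : ∀ j : Fin T, k < (j : ℕ) + 1 → x j = 0) :
    (∀ j : Fin T, k + 1 < (j : ℕ) + 1 →
      gradient (Echain T) x j = 0 ∧ gradient (Ochain T) x j = 0) ∧
    (Odd k → gradient (Echain T) x ⟨k, hk⟩ = 0) ∧
    (Even k → gradient (Ochain T) x ⟨k, hk⟩ = 0) := by
  have hc : ∀ m, k ≤ m → coord x m = 0 :=
    fun m => coord_eq_zero_of_le x fun j hj => hx j (Nat.lt_succ_of_le hj)
  refine ⟨fun j hj => ⟨?_, ?_⟩, fun hodd => ?_, fun heven => ?_⟩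
  · exact gradient_Echain_eq_zero (by omega) fun i _ hij => hc _ (by omega)
  · exact gradient_Ochain_eq_zero fun i _ hij => hc _ (by omega)
  · refine gradient_Echain_eq_zero hodd.pos.ne' fun i hi hij => hc _ ?_
    rcases hij with h | rfl
    · exact h.ge
    · exact absurd (Finset.mem_filter.mp hi).2 (Nat.not_even_iff_odd.mpr hodd)
  · refine gradient_Ochain_eq_zero fun i hi hij => hc _ ?_
    rcases hij with h | rfl
    · exact h.ge
    · exact absurd (Finset.mem_filter.mp hi).2 (Nat.not_odd_iff_even.mpr heven)

/-- Progress along the chain alternates between E and O: if all (1-based) coordinates of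
x beyond k vanish then (i) all partial derivatives of E and O beyond k+1 vanish;
(ii) if k is odd then ∂_{k+1}E(x) = 0; (iii) if k is even then ∂_{k+1}O(x) = 0. -/
theorem chain_alternation (T : ℕ) (hT : 1 ≤ T) (x : EuclideanSpace ℝ (Fin T))
    (k : ℕ) (hk : k < T) (hx : ∀ j : Fin T, k < (j : ℕ) + 1 → x j = 0) :
    (∀ j : Fin T, k + 1 < (j : ℕ) + 1 →
      gradient (Echain T) x j = 0 ∧ gradient (Ochain T) x j = 0) ∧
    (Odd k → gradient (Echain T) x ⟨k, hk⟩ = 0) ∧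
    (Even k → gradient (Ochain T) x ⟨k, hk⟩ = 0) :=
  chain_alternation_general T x k hk hx
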